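/- arXiv:0910.2958 — 2 statements merged into one kernel-verified Lean document; each statement's English description precedes it below -/
import Mathlib

section
/- Let R ⊆ ℝ² be a compact set homeomorphic to the closed 2-disk and f : R → ℝ a continuous function that is constant on the boundary ∂R and such that every point of the interior of R is a regular point of f. Then f is constant on all of R. (Equivalently: if f is non-constant on R, then f attains a local extremum at an interior point, contradicting regularity.) -/
noncomputable section
open Set Topology

/-- Points of the plane. -/
abbrev Pt : Type := ℝ × ℝ

/-- The closed unit disk `D²`. -/
def closedDisk : Set Pt := {p | p.1 ^ 2 + p.2 ^ 2 ≤ 1}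

/-- The open unit disk `Int D²`. -/
def openDisk : Set Pt := {p | p.1 ^ 2 + p.2 ^ 2 < 1}

/-- The half-disk `D²₊ = { z : |z| < 1, Im z ≥ 0 }`. -/
def chartHalfDisk : Set Pt := {p | p.1 ^ 2 + p.2 ^ 2 < 1 ∧ 0 ≤ p.2}

/-- `z₀` is a regular point of `f` (relative to the domain `W`): there are an open
neighbourhood `U ⊆ W` of `z₀` and a homeomorphism `φ : U ≃ₜ Int D²` with `φ z₀ = 0`
and `f ∘ φ⁻¹ (z) = Re z + f z₀`. -/
def IsRegularPoint (W : Set Pt) (f : Pt → ℝ) (z₀ : Pt) : Prop :=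
  ∃ (U : Set Pt) (_ : IsOpen U) (_ : U ⊆ W) (hz : z₀ ∈ U) (φ : U ≃ₜ openDisk),
    (φ ⟨z₀, hz⟩ : Pt) = (0, 0) ∧
    ∀ z : openDisk, f (φ.symm z : Pt) = (z : Pt).1 + f z₀

/-- `z₀` is a regular boundary point of `f` on the domain `D`: there are a
neighbourhood `U` of `z₀` in `D` and a homeomorphism `ψ : U ≃ₜ D²₊` with `ψ z₀ = 0`,
`ψ (U ∩ f⁻¹(f z₀)) = {0} × [0,1)`, `ψ (U ∩ Fr D) = (−1,1) × {0}`, and `f ∘ ψ⁻¹`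
strictly monotone on `(−1,1) × {0}`. -/
def IsRegularBoundaryPoint (D : Set Pt) (f : Pt → ℝ) (z₀ : Pt) : Prop :=
  ∃ (U : Set Pt) (_ : U ⊆ D) (hz : z₀ ∈ U) (_ : ∃ V : Set Pt, IsOpen V ∧ U = V ∩ D)
    (ψ : U ≃ₜ chartHalfDisk),
    (ψ ⟨z₀, hz⟩ : Pt) = (0, 0) ∧
    (∀ z : U, f (z : Pt) = f z₀ ↔ (ψ z : Pt).1 = 0) ∧
    (∀ z : U, (z : Pt) ∈ frontier D ↔ (ψ z : Pt).2 = 0) ∧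
    (∃ g : ℝ → ℝ,
      (StrictMonoOn g (Ioo (-1 : ℝ) 1) ∨ StrictAntiOn g (Ioo (-1 : ℝ) 1)) ∧
      ∀ (x : ℝ) (hx : x ∈ Ioo (-1 : ℝ) 1),
        g x = f (ψ.symm ⟨(x, 0),
          ⟨by obtain ⟨h1, h2⟩ := hx; simp only [] ; nlinarith, le_refl 0⟩⟩ : Pt))

/-- A `U`-trajectory of `f` inside `D`: a simple continuous curve along which `f`
is strictly monotone. -/
def IsUTrajectory (D : Set Pt) (f : Pt → ℝ) (γ : ℝ → Pt) : Prop :=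
  ContinuousOn γ (Icc 0 1) ∧ InjOn γ (Icc 0 1) ∧ γ '' Icc 0 1 ⊆ D ∧
    (StrictMonoOn (f ∘ γ) (Icc 0 1) ∨ StrictAntiOn (f ∘ γ) (Icc 0 1))

lemma not_extremum_of_regular {W : Set Pt} {f : Pt → ℝ} {z₀ : Pt}
    (h : IsRegularPoint W f z₀) :
    (∃ w ∈ W, f z₀ < f w) ∧ (∃ w ∈ W, f w < f z₀) := by
  obtain ⟨U, hUo, hUW, hz, φ, hφ0, hφf⟩ := h
  have hmem : ∀ x : ℝ, x ∈ Ioo (-1:ℝ) 1 → ((x, 0) : Pt) ∈ openDisk := by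
    intro x hx
    simp only [openDisk, mem_setOf_eq]
    obtain ⟨h1, h2⟩ := hx
    nlinarith
  constructor
  · refine ⟨(φ.symm ⟨(1/2, 0), hmem _ (by norm_num)⟩ : Pt), hUW (φ.symm _).2, ?_⟩
    rw [hφf]; norm_num
  · refine ⟨(φ.symm ⟨(-(1/2), 0), hmem _ (by norm_num)⟩ : Pt), hUW (φ.symm _).2, ?_⟩
    rw [hφf]; norm_num

/-- If `R` is a compact set homeomorphic to the closed 2-disk, `f` is continuous on `R`,
constant on the boundary `∂R`, and every interior point of `R` is a regular point of `f`,
then `f` is constant on all of `R`. -/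
theorem constant_of_regular_interior {R : Set Pt} (f : Pt → ℝ) (hR : IsCompact R)
    (hhomeo : Nonempty (R ≃ₜ closedDisk)) (hf : ContinuousOn f R)
    (hconst : ∀ x ∈ frontier R, ∀ y ∈ frontier R, f x = f y)
    (hreg : ∀ z ∈ interior R, IsRegularPoint (interior R) f z) :
    ∀ x ∈ R, ∀ y ∈ R, f x = f y := by
  intro x hx y hy
  obtain ⟨a, ha, hmax⟩ := hR.exists_isMaxOn ⟨x, hx⟩ hf
  obtain ⟨b, hb, hmin⟩ := hR.exists_isMinOn ⟨x, hx⟩ hf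
  have hfr : frontier R = R \ interior R := by
    rw [frontier, hR.isClosed.closure_eq]
  have haf : a ∈ frontier R := by
    rw [hfr]
    refine ⟨ha, fun hai => ?_⟩
    obtain ⟨⟨w, hw, hlt⟩, -⟩ := not_extremum_of_regular (hreg a hai)
    exact absurd (hmax (interior_subset hw)) (not_le.mpr hlt)
  have hbf : b ∈ frontier R := by
    rw [hfr]
    refine ⟨hb, fun hbi => ?_⟩
    obtain ⟨-, ⟨w, hw, hlt⟩⟩ := not_extremum_of_regular (hreg b hbi)
    exact absurd (hmin (interior_subset hw)) (not_le.mpr hlt)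
  have hab : f a = f b := hconst a haf b hbf
  have h1 : f x ≤ f a := hmax hx
  have h2 : f b ≤ f x := hmin hx
  have h3 : f y ≤ f a := hmax hy
  have h4 : f b ≤ f y := hmin hy
  linarith
end
end

section
/- For a continuous curve λ : I → ℝ² whose support is a line segment of length s, the quantities μ_n(λ) = s/n for all n ∈ ℕ, hence the μ-length of λ equals s·S with S = Σ_{n≥1} 1/(n·2ⁿ), and the μ-parametrization r_λ : [0, μ_λ] → λ(I) is the linear (constant-speed) parametrization of the segment. -/
/-! Distances between points of the segment `[A, B]` are differences of their distances to `A`,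
so `t ↦ dist A (λ t)` is a real coordinate along `λ`; being continuous and injective it is
strictly monotone, and `λ` runs once through the segment from one endpoint to the other. For a
monotone chain of `n + 1` points the steps of this coordinate add up to at most `s`, so the
shortest step is at most `s / n`, and the chain through the coordinates `0, s/n, …, s` attains
this bound. Restricting `λ` to `[0, τ]` gives a path of the same kind along `[λ 0, λ τ]`, which
makes the `μ`-parametrization linear. -/

noncomputable section
open Set Topology

/-- `d(p₀, …, p_n)`: the minimum of the distances of consecutive points `λ (t i)`
along the curve (by convention `0` when `n = 0`). -/
def chainMin (lam : ℝ → Pt) (n : ℕ) (t : Fin (n + 1) → ℝ) : ℝ :=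
  sInf (Set.range fun i : Fin n => dist (lam (t i.castSucc)) (lam (t i.succ)))

/-- `μ_n(λ) = sup { d(p₀, …, p_n) }` over all monotone sequences of parameters in `I`. -/
def muN (lam : ℝ → Pt) (n : ℕ) : ℝ :=
  sSup {r | ∃ t : Fin (n + 1) → ℝ, Monotone t ∧ (∀ i, t i ∈ Icc (0:ℝ) 1) ∧
    r = chainMin lam n t}

/-- The `μ`-length `μ_λ = Σ_{n ≥ 1} μ_n(λ) / 2ⁿ` of a curve `λ : I → ℝ²`. -/
def muLength (lam : ℝ → Pt) : ℝ := ∑' n : ℕ, muN lam (n + 1) / 2 ^ (n + 1)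

/-- The `μ`-length of `λ` from `0` to `t`. -/
def muUpTo (lam : ℝ → Pt) (t : ℝ) : ℝ := muLength fun u => lam (t * u)

theorem sum_succ_sub_castSucc {M : Type*} [AddCommGroup M] (n : ℕ) (y : Fin (n + 1) → M) :
    ∑ i : Fin n, (y i.succ - y i.castSucc) = y (Fin.last n) - y 0 := by
  induction n with
  | zero => simp
  | succ n ih =>
    rw [Fin.sum_univ_castSucc]
    simp only [Fin.succ_castSucc, Fin.succ_last]
    have := ih (y ∘ Fin.castSucc)
    simp only [Function.comp_apply, Fin.castSucc_zero] at this
    rw [this]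
    abel

theorem exists_succ_sub_castSucc_le {n : ℕ} (hn : 0 < n) (y : Fin (n + 1) → ℝ) :
    ∃ i : Fin n, y i.succ - y i.castSucc ≤ (y (Fin.last n) - y 0) / n := by
  have : Nonempty (Fin n) := Fin.pos_iff_nonempty.mp hn
  obtain ⟨i, -, hi⟩ := Finset.exists_le_of_sum_le Finset.univ_nonempty
    (f := fun i : Fin n => y i.succ - y i.castSucc)
    (g := fun _ => (y (Fin.last n) - y 0) / n) <| by
      rw [sum_succ_sub_castSucc, Finset.sum_const, Finset.card_univ, Fintype.card_fin,
        nsmul_eq_mul, mul_div_cancel₀ _ (Nat.cast_ne_zero.mpr hn.ne')]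
  exact ⟨i, hi⟩

theorem MonotoneOn.invFunOn_image {α β : Type*} [LinearOrder α] [PartialOrder β] [Nonempty α]
    {f : α → β} {s : Set α} (hf : MonotoneOn f s) :
    MonotoneOn (Function.invFunOn f s) (f '' s) := by
  intro x hx y hy hxy
  obtain ⟨hxs, hfx⟩ := Function.invFunOn_pos (f := f) hx
  obtain ⟨hys, hfy⟩ := Function.invFunOn_pos (f := f) hy
  by_contra! hlt
  have hyx : y ≤ x := hfy ▸ hfx ▸ hf hys hxs hlt.le
  exact hlt.ne (congrArg _ (le_antisymm hxy hyx).symm)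

theorem chainMin_le (lam : ℝ → Pt) {n : ℕ} (t : Fin (n + 1) → ℝ) (i : Fin n) :
    chainMin lam n t ≤ dist (lam (t i.castSucc)) (lam (t i.succ)) :=
  csInf_le (Set.finite_range _).bddBelow ⟨i, rfl⟩

theorem le_chainMin (lam : ℝ → Pt) {n : ℕ} (hn : 0 < n) (t : Fin (n + 1) → ℝ) {d : ℝ}
    (hd : ∀ i : Fin n, d ≤ dist (lam (t i.castSucc)) (lam (t i.succ))) :
    d ≤ chainMin lam n t :=
  have : Nonempty (Fin n) := Fin.pos_iff_nonempty.mp hn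
  le_csInf (Set.range_nonempty _) (Set.forall_mem_range.mpr hd)

/-- `lam` runs along a line without turning back: distances along it are the increments of a
continuous monotone or antitone real coordinate `h`. -/
def IsMonotoneLinearPath {E : Type*} [PseudoMetricSpace E] (lam : ℝ → E) : Prop :=
  ∃ h : ℝ → ℝ, ContinuousOn h (Icc 0 1) ∧
    (MonotoneOn h (Icc 0 1) ∨ AntitoneOn h (Icc 0 1)) ∧
    ∀ t ∈ Icc (0:ℝ) 1, ∀ u ∈ Icc (0:ℝ) 1, dist (lam t) (lam u) = |h t - h u|

theorem dist_succ_eq_sub_of_monotoneOn {lam : ℝ → Pt} {h : ℝ → ℝ}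
    (hm : MonotoneOn h (Icc 0 1))
    (hdist : ∀ t ∈ Icc (0:ℝ) 1, ∀ u ∈ Icc (0:ℝ) 1, dist (lam t) (lam u) = |h t - h u|)
    {n : ℕ} {t : Fin (n + 1) → ℝ} (ht : Monotone t) (hI : ∀ i, t i ∈ Icc (0:ℝ) 1)
    (i : Fin n) :
    dist (lam (t i.castSucc)) (lam (t i.succ)) = h (t i.succ) - h (t i.castSucc) := by
  rw [hdist _ (hI _) _ (hI _), abs_sub_comm,
    abs_of_nonneg (sub_nonneg.mpr (hm (hI _) (hI _) (ht i.castSucc_le_succ)))]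

theorem chainMin_le_of_monotoneOn {lam : ℝ → Pt} {h : ℝ → ℝ}
    (hm : MonotoneOn h (Icc 0 1))
    (hdist : ∀ t ∈ Icc (0:ℝ) 1, ∀ u ∈ Icc (0:ℝ) 1, dist (lam t) (lam u) = |h t - h u|)
    {n : ℕ} (hn : 0 < n) {t : Fin (n + 1) → ℝ} (ht : Monotone t)
    (hI : ∀ i, t i ∈ Icc (0:ℝ) 1) : chainMin lam n t ≤ (h 1 - h 0) / n := by
  obtain ⟨i, hi⟩ := exists_succ_sub_castSucc_le hn (h ∘ t)
  calc chainMin lam n t ≤ dist (lam (t i.castSucc)) (lam (t i.succ)) := chainMin_le lam t i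
    _ = h (t i.succ) - h (t i.castSucc) := dist_succ_eq_sub_of_monotoneOn hm hdist ht hI i
    _ ≤ (h (t (Fin.last n)) - h (t 0)) / n := hi
    _ ≤ (h 1 - h 0) / n := by
      gcongr
      exacts [hm (hI _) (right_mem_Icc.mpr zero_le_one) (hI _).2,
        hm (left_mem_Icc.mpr zero_le_one) (hI _) (hI _).1]

theorem exists_le_chainMin_of_monotoneOn {lam : ℝ → Pt} {h : ℝ → ℝ}
    (hc : ContinuousOn h (Icc 0 1)) (hm : MonotoneOn h (Icc 0 1))
    (hdist : ∀ t ∈ Icc (0:ℝ) 1, ∀ u ∈ Icc (0:ℝ) 1, dist (lam t) (lam u) = |h t - h u|)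
    {n : ℕ} (hn : 0 < n) :
    ∃ t : Fin (n + 1) → ℝ, Monotone t ∧ (∀ i, t i ∈ Icc (0:ℝ) 1) ∧
      (h 1 - h 0) / n ≤ chainMin lam n t := by
  have hnR : (0:ℝ) < n := Nat.cast_pos.mpr hn
  have hdiff : 0 ≤ h 1 - h 0 :=
    sub_nonneg.mpr (hm (left_mem_Icc.mpr zero_le_one) (right_mem_Icc.mpr zero_le_one) zero_le_one)
  set c : Fin (n + 1) → ℝ := fun i => h 0 + i * (h 1 - h 0) / n with hc_def
  have hc_mono : Monotone c := fun i j hij => by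
    have : (i : ℝ) ≤ j := Nat.cast_le.mpr hij
    simp only [hc_def]
    gcongr
  have hc_mem : ∀ i, c i ∈ h '' Icc 0 1 := fun i => by
    refine intermediate_value_Icc zero_le_one hc ⟨?_, ?_⟩
    · have : (0:ℝ) ≤ i * (h 1 - h 0) / n := by positivity
      linarith
    · have : (i : ℝ) * (h 1 - h 0) / n ≤ h 1 - h 0 := by
        rw [div_le_iff₀ hnR, mul_comm _ (n : ℝ)]
        exact mul_le_mul_of_nonneg_right (Nat.cast_le.mpr i.is_le) hdiff
      linarith
  set t := fun i => Function.invFunOn h (Icc 0 1) (c i)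
  have hI : ∀ i, t i ∈ Icc (0:ℝ) 1 := fun i => (Function.invFunOn_pos (hc_mem i)).1
  have hht : ∀ i, h (t i) = c i := fun i => (Function.invFunOn_pos (hc_mem i)).2
  have ht : Monotone t := fun i j hij => hm.invFunOn_image (hc_mem i) (hc_mem j) (hc_mono hij)
  refine ⟨t, ht, hI, le_chainMin lam hn t fun i => ?_⟩
  rw [dist_succ_eq_sub_of_monotoneOn hm hdist ht hI i]
  simp only [hht, hc_def, Fin.val_succ, Fin.val_castSucc, Nat.cast_succ]
  exact le_of_eq (by ring)

theorem muN_eq_of_monotoneOn {lam : ℝ → Pt} {h : ℝ → ℝ} (hc : ContinuousOn h (Icc 0 1))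
    (hm : MonotoneOn h (Icc 0 1))
    (hdist : ∀ t ∈ Icc (0:ℝ) 1, ∀ u ∈ Icc (0:ℝ) 1, dist (lam t) (lam u) = |h t - h u|)
    {n : ℕ} (hn : 0 < n) : muN lam n = (h 1 - h 0) / n := by
  obtain ⟨t, ht, hI, hle⟩ := exists_le_chainMin_of_monotoneOn hc hm hdist hn
  refine IsGreatest.csSup_eq ⟨⟨t, ht, hI, le_antisymm hle ?_⟩, ?_⟩
  · exact chainMin_le_of_monotoneOn hm hdist hn ht hI
  · rintro r ⟨t, ht, hI, rfl⟩
    exact chainMin_le_of_monotoneOn hm hdist hn ht hI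

theorem dist_eq_abs_dist_sub_dist_of_mem_segment {E : Type*} [NormedAddCommGroup E]
    [NormedSpace ℝ E] {A B P Q : E} (hP : P ∈ segment ℝ A B) (hQ : Q ∈ segment ℝ A B) :
    dist P Q = |dist A P - dist A Q| := by
  rw [segment_eq_image_lineMap] at hP hQ
  obtain ⟨c, hc, rfl⟩ := hP
  obtain ⟨d, hd, rfl⟩ := hQ
  rw [dist_lineMap_lineMap, dist_left_lineMap, dist_left_lineMap, Real.norm_of_nonneg hc.1,
    Real.norm_of_nonneg hd.1, ← sub_mul, abs_mul, abs_of_nonneg dist_nonneg, Real.dist_eq]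

theorem dist_le_of_mem_segment {E : Type*} [NormedAddCommGroup E] [NormedSpace ℝ E]
    {A B P Q : E} (hP : P ∈ segment ℝ A B) (hQ : Q ∈ segment ℝ A B) :
    dist P Q ≤ dist A B :=
  dist_comm Q P ▸ (convex_closedBall P _).segment_subset
    (Metric.mem_closedBall_comm.mp (segment_subset_closedBall_left A B hP))
    (Metric.mem_closedBall_comm.mp (segment_subset_closedBall_right A B hP)) hQ

namespace IsMonotoneLinearPath

theorem muN_eq {lam : ℝ → Pt} (hlam : IsMonotoneLinearPath lam) {n : ℕ} (hn : 0 < n) :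
    muN lam n = dist (lam 0) (lam 1) / n := by
  have h0 : (0:ℝ) ∈ Icc (0:ℝ) 1 := left_mem_Icc.mpr zero_le_one
  have h1 : (1:ℝ) ∈ Icc (0:ℝ) 1 := right_mem_Icc.mpr zero_le_one
  obtain ⟨h, hc, hm | ha, hdist⟩ := hlam
  · rw [muN_eq_of_monotoneOn hc hm hdist hn, hdist 0 h0 1 h1, abs_sub_comm,
      abs_of_nonneg (sub_nonneg.mpr (hm h0 h1 zero_le_one))]
  · have hdist' : ∀ t ∈ Icc (0:ℝ) 1, ∀ u ∈ Icc (0:ℝ) 1,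
        dist (lam t) (lam u) = |(-h) t - (-h) u| := fun t ht u hu => by
      rw [hdist t ht u hu, Pi.neg_apply, Pi.neg_apply, neg_sub_neg, abs_sub_comm]
    rw [muN_eq_of_monotoneOn hc.neg ha.neg hdist' hn, hdist 0 h0 1 h1, Pi.neg_apply,
      Pi.neg_apply, neg_sub_neg, abs_of_nonneg (sub_nonneg.mpr (ha h0 h1 zero_le_one))]

theorem muLength_eq {lam : ℝ → Pt} (hlam : IsMonotoneLinearPath lam) :
    muLength lam =
      dist (lam 0) (lam 1) * ∑' n : ℕ, (1 : ℝ) / (((n : ℝ) + 1) * 2 ^ (n + 1)) := by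
  rw [muLength, ← tsum_mul_left]
  refine tsum_congr fun n => ?_
  rw [hlam.muN_eq n.succ_pos]
  push_cast
  field_simp

theorem comp_const_mul {E : Type*} [PseudoMetricSpace E] {lam : ℝ → E}
    (hlam : IsMonotoneLinearPath lam) {τ : ℝ} (hτ : τ ∈ Icc (0:ℝ) 1) :
    IsMonotoneLinearPath fun u => lam (τ * u) := by
  obtain ⟨h, hc, hmono, hdist⟩ := hlam
  have hmaps : MapsTo (τ * ·) (Icc (0:ℝ) 1) (Icc 0 1) := fun u hu =>
    ⟨mul_nonneg hτ.1 hu.1, mul_le_one₀ hτ.2 hu.1 hu.2⟩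
  have hmul : MonotoneOn (τ * ·) (Icc (0:ℝ) 1) := fun u _ v _ huv =>
    mul_le_mul_of_nonneg_left huv hτ.1
  exact ⟨fun u => h (τ * u), hc.comp (continuousOn_const.mul continuousOn_id) hmaps,
    hmono.imp (fun hm => hm.comp hmul hmaps) (fun ha => ha.comp_MonotoneOn hmul hmaps),
    fun t ht u hu => hdist _ (hmaps ht) _ (hmaps hu)⟩

theorem dist_le {E : Type*} [PseudoMetricSpace E] {lam : ℝ → E}
    (hlam : IsMonotoneLinearPath lam) {t u : ℝ} (ht : t ∈ Icc (0:ℝ) 1)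
    (hu : u ∈ Icc (0:ℝ) 1) :
    dist (lam t) (lam u) ≤ dist (lam 0) (lam 1) := by
  obtain ⟨h, -, hmono, hdist⟩ := hlam
  have hmaps : MapsTo h (Icc 0 1) (uIcc (h 0) (h 1)) := by
    rw [← uIcc_of_le zero_le_one]
    rcases hmono with hm | ha
    · exact (uIcc_of_le (zero_le_one (α := ℝ)) ▸ hm).mapsTo_uIcc
    · exact (uIcc_of_le (zero_le_one (α := ℝ)) ▸ ha).mapsTo_uIcc
  rw [hdist t ht u hu, hdist 0 (left_mem_Icc.mpr zero_le_one) 1 (right_mem_Icc.mpr zero_le_one),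
    abs_sub_comm (h 0)]
  exact abs_sub_le_of_uIcc_subset_uIcc (uIcc_subset_uIcc (hmaps hu) (hmaps ht))

theorem of_injOn_segment {E : Type*} [NormedAddCommGroup E] [NormedSpace ℝ E] {lam : ℝ → E}
    {A B : E} (hcont : ContinuousOn lam (Icc 0 1)) (hinj : InjOn lam (Icc 0 1))
    (hseg : lam '' Icc 0 1 ⊆ segment ℝ A B) : IsMonotoneLinearPath lam := by
  have hdist : ∀ t ∈ Icc (0:ℝ) 1, ∀ u ∈ Icc (0:ℝ) 1,
      dist (lam t) (lam u) = |dist A (lam t) - dist A (lam u)| := fun t ht u hu =>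
    dist_eq_abs_dist_sub_dist_of_mem_segment (hseg (mem_image_of_mem lam ht))
      (hseg (mem_image_of_mem lam hu))
  have hc : ContinuousOn (fun t => dist A (lam t)) (Icc 0 1) :=
    (continuous_const.dist continuous_id).comp_continuousOn hcont
  have hinj' : InjOn (fun t => dist A (lam t)) (Icc 0 1) := fun t ht u hu htu =>
    hinj ht hu (dist_eq_zero.mp ((hdist t ht u hu).trans (by simp only [htu, sub_self, abs_zero])))
  exact ⟨_, hc, (hc.strictMonoOn_of_injOn_Icc' zero_le_one hinj').imp
    StrictMonoOn.monotoneOn StrictAntiOn.antitoneOn, hdist⟩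

end IsMonotoneLinearPath

/-- For a simple continuous curve `λ` whose support is a line segment of length `s`:
`μ_n(λ) = s / n` for all `n ≥ 1`, hence `μ_λ = s · S` with `S = Σ_{n≥1} 1/(n·2ⁿ)`; and the
`μ`-parametrization is linear, i.e. the `μ`-length of `λ` from `0` to `τ` equals
`S · dist (λ 0) (λ τ)`. -/
theorem mu_length_of_segment (lam : ℝ → Pt) (A B : Pt) (s : ℝ)
    (hcont : ContinuousOn lam (Icc 0 1)) (hinj : InjOn lam (Icc 0 1))
    (himg : lam '' Icc 0 1 = segment ℝ A B) (hs : dist A B = s) :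
    (∀ n : ℕ, 1 ≤ n → muN lam n = s / n) ∧
    muLength lam = s * ∑' n : ℕ, (1 : ℝ) / (((n : ℝ) + 1) * 2 ^ (n + 1)) ∧
    ∀ τ ∈ Icc (0:ℝ) 1,
      muUpTo lam τ =
        (∑' n : ℕ, (1 : ℝ) / (((n : ℝ) + 1) * 2 ^ (n + 1))) * dist (lam 0) (lam τ) := by
  have hlam : IsMonotoneLinearPath lam := .of_injOn_segment hcont hinj himg.subset
  have hmem : ∀ t ∈ Icc (0:ℝ) 1, lam t ∈ segment ℝ A B := fun t ht =>
    himg ▸ mem_image_of_mem lam ht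
  have hends : dist (lam 0) (lam 1) = s := by
    obtain ⟨a, ha, hA⟩ : A ∈ lam '' Icc 0 1 := himg ▸ left_mem_segment ℝ A B
    obtain ⟨b, hb, hB⟩ : B ∈ lam '' Icc 0 1 := himg ▸ right_mem_segment ℝ A B
    refine hs ▸ le_antisymm (dist_le_of_mem_segment (hmem 0 ?_) (hmem 1 ?_)) ?_
    · exact left_mem_Icc.mpr zero_le_one
    · exact right_mem_Icc.mpr zero_le_one
    · exact hA ▸ hB ▸ hlam.dist_le ha hb
  refine ⟨fun n hn => hends ▸ hlam.muN_eq hn, hends ▸ hlam.muLength_eq, fun τ hτ => ?_⟩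
  rw [muUpTo, (hlam.comp_const_mul hτ).muLength_eq, mul_zero, mul_one, mul_comm]
end
end
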